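/- arXiv:2210.14707 — 3 statements merged into one kernel-verified Lean document; each statement's English description precedes it below -/
import Mathlib

section
/- Let C_1,...,C_r be measurable sets covering a measurable space X, and let D be a probability measure on X. If S = (x_1,...,x_n) is a sample of n points drawn i.i.d. from D, then the expectation over S of the sum, over all indices i such that C_i contains no sample point, of D(C_i), is at most r/(e*n). -/
open MeasureTheory Classical

lemma aux_pq (p : ℝ) (hp0 : 0 ≤ p) (hp1 : p ≤ 1) (n : ℕ) (hn : 0 < n) :
    p * (1 - p) ^ n ≤ 1 / (Real.exp 1 * n) := by
  have h1 : (1 - p) ^ n ≤ Real.exp (-p) ^ n := by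
    apply pow_le_pow_left₀ (by linarith)
    linarith [Real.add_one_le_exp (-p)]
  have h2 : Real.exp (-p) ^ n = Real.exp (-(p * n)) := by
    rw [← Real.exp_nat_mul]; ring_nf
  have hx : p * n ≤ Real.exp (p * n - 1) := by
    have := Real.add_one_le_exp (p * n - 1); linarith
  have hkey : p * n * Real.exp (-(p * n)) ≤ (Real.exp 1)⁻¹ := by
    calc p * n * Real.exp (-(p * n)) ≤ Real.exp (p * n - 1) * Real.exp (-(p * n)) := by
          apply mul_le_mul_of_nonneg_right hx (Real.exp_nonneg _)
      _ = Real.exp (-1) := by rw [← Real.exp_add]; ring_nf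
      _ = (Real.exp 1)⁻¹ := Real.exp_neg 1
  have hnpos : (0 : ℝ) < n := by exact_mod_cast hn
  have hepos : (0 : ℝ) < Real.exp 1 := Real.exp_pos 1
  calc p * (1 - p) ^ n ≤ p * Real.exp (-(p * n)) := by
        rw [← h2]; exact mul_le_mul_of_nonneg_left h1 hp0
    _ = (p * n * Real.exp (-(p * n))) / n := by field_simp
    _ ≤ (Real.exp 1)⁻¹ / n := by gcongr
    _ = 1 / (Real.exp 1 * n) := by field_simp

/-- If measurable sets `C 1, ..., C r` cover `X` and `S` is an i.i.d. sample of size `n`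
from a probability measure `D`, then the expected total mass of the cells containing no
sample point is at most `r / (e * n)`. -/
theorem stmt_1 {X : Type*} [MeasurableSpace X] (D : Measure X) [IsProbabilityMeasure D]
    (r n : ℕ) (hn : 0 < n) (C : Fin r → Set X) (hC : ∀ i, MeasurableSet (C i))
    (hcover : (⋃ i, C i) = Set.univ) :
    ∫ S : Fin n → X,
        (∑ i : Fin r, if ∀ j, S j ∉ C i then (D (C i)).toReal else 0)
      ∂(Measure.pi fun _ : Fin n => D)
    ≤ (r : ℝ) / (Real.exp 1 * n) := by
  classical
  set μ : Measure (Fin n → X) := Measure.pi fun _ : Fin n => D with hμ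
  have hAset : ∀ i : Fin r, {S : Fin n → X | ∀ j, S j ∉ C i}
      = Set.pi Set.univ (fun _ : Fin n => (C i)ᶜ) := by
    intro i; ext S; simp [Set.mem_pi]
  have hAmeas : ∀ i : Fin r, MeasurableSet {S : Fin n → X | ∀ j, S j ∉ C i} := by
    intro i; rw [hAset i]
    exact MeasurableSet.univ_pi fun _ => (hC i).compl
  have hrw : ∀ i : Fin r, (fun S : Fin n → X =>
      if ∀ j, S j ∉ C i then (D (C i)).toReal else 0)
      = Set.indicator {S : Fin n → X | ∀ j, S j ∉ C i} (fun _ => (D (C i)).toReal) := by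
    intro i; ext S
    by_cases h : ∀ j, S j ∉ C i <;> simp [Set.indicator, h]
  have hint : ∀ i : Fin r, Integrable (fun S : Fin n → X =>
      if ∀ j, S j ∉ C i then (D (C i)).toReal else 0) μ := by
    intro i; rw [hrw i]
    exact (integrable_const _).indicator (hAmeas i)
  rw [integral_finset_sum _ fun i _ => hint i]
  have hval : ∀ i : Fin r, ∫ S, (if ∀ j, S j ∉ C i then (D (C i)).toReal else 0) ∂μ
      = (D (C i)).toReal * (1 - (D (C i)).toReal) ^ n := by
    intro i
    rw [hrw i, integral_indicator_const _ (hAmeas i)]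
    have hμA : μ {S : Fin n → X | ∀ j, S j ∉ C i} = (D (C i)ᶜ) ^ n := by
      rw [hAset i, hμ, Measure.pi_pi]
      simp
    have hcompl : D (C i)ᶜ = 1 - D (C i) := prob_compl_eq_one_sub (hC i)
    have hle : D (C i) ≤ 1 := prob_le_one
    rw [Measure.real, hμA, hcompl]
    rw [ENNReal.toReal_pow, ENNReal.toReal_sub_of_le hle ENNReal.one_ne_top]
    simp [mul_comm]
  calc ∑ i : Fin r, ∫ S, (if ∀ j, S j ∉ C i then (D (C i)).toReal else 0) ∂μ
      = ∑ i : Fin r, (D (C i)).toReal * (1 - (D (C i)).toReal) ^ n := by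
        exact Finset.sum_congr rfl fun i _ => hval i
    _ ≤ ∑ i : Fin r, 1 / (Real.exp 1 * n) := by
        apply Finset.sum_le_sum
        intro i _
        exact aux_pq _ ENNReal.toReal_nonneg
          (by simpa using ENNReal.toReal_mono ENNReal.one_ne_top (prob_le_one (μ := D) (s := C i))) n hn
    _ = (r : ℝ) / (Real.exp 1 * n) := by
        rw [Finset.sum_const, Finset.card_univ, Fintype.card_fin, nsmul_eq_mul]; ring
end

section
/- Let D_I be a probability distribution supported on [0,1)^d. For each n, let S be an i.i.d. sample of n points from D_I, and let π(x,S) denote a nearest point to x among the sample points (in Euclidean distance). Then the expectation over x ~ D_I and S ~ D_I^n of dist(x, π(x,S)) is at most 2√d · n^{-1/(d+1)} + (√d / (2^d · e)) · n^{-1/(d+1)}; in particular this expectation tends to 0 as n → ∞. -/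
open MeasureTheory

section Helpers
open Real Set

lemma zpow_convex_bound (t : ℝ) (d : ℕ) (h1 : 1/2 ≤ t) (h2 : t ≤ 1) :
    t ^ (-(d:ℤ)) ≤ 2^(d+1) * (1 - t) + 2*t - 1 := by
  have h := (convexOn_zpow (𝕜 := ℝ) (-(d:ℤ))).2 (show (1/2:ℝ) ∈ Ioi 0 by norm_num)
    (show (1:ℝ) ∈ Ioi 0 by norm_num) (show (0:ℝ) ≤ 2*(1-t) by linarith)
    (show (0:ℝ) ≤ 2*t-1 by linarith) (by ring)
  simp only [smul_eq_mul] at h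
  have e1 : 2*(1-t) * ((1:ℝ)/2) + (2*t-1) * (1:ℝ) = t := by ring
  rw [e1] at h
  refine h.trans ?_
  have h3 : ((1:ℝ)/2) ^ (-(d:ℤ)) = 2^d := by
    rw [one_div, inv_zpow, ← zpow_neg, neg_neg, zpow_natCast]
  rw [h3, one_zpow]
  ring_nf
  nlinarith [pow_pos (show (0:ℝ)<2 by norm_num) d]

lemma anal_lemma (d : ℕ) (x : ℝ) (hx : 2 < x) :
    1/(⌈x/2⌉₊ : ℝ) + (⌈x/2⌉₊:ℝ)^d / (Real.exp 1 * x^(d+1))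
      ≤ 2/x + 1/(2^d * Real.exp 1 * x) := by
  set m : ℕ := ⌈x/2⌉₊ with hm
  have hx0 : (0:ℝ) < x := by linarith
  have hm2 : 2 ≤ m := by
    have : 1 < ⌈x/2⌉₊ := by
      rw [Nat.lt_ceil]; push_cast; linarith
    omega
  have hm0 : (0:ℝ) < m := by positivity
  have hmx : (m:ℝ) ≤ x := by
    have := Nat.ceil_lt_add_one (show (0:ℝ) ≤ x/2 by linarith)
    have : (m:ℝ) < x/2 + 1 := this
    linarith
  have hxm : x ≤ 2*m := by
    have := Nat.le_ceil (x/2)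
    linarith
  set t : ℝ := x/(2*m) with ht
  have h1 : 1/2 ≤ t := by rw [ht, le_div_iff₀ (by positivity)]; linarith
  have h2 : t ≤ 1 := by rw [ht, div_le_one (by positivity)]; linarith
  have ht0 : 0 < t := by positivity
  have key := zpow_convex_bound t d h1 h2
  have hA : t ^ (-(d:ℤ)) = 2^d * ((m:ℝ)^d/x^d) := by
    rw [zpow_neg, zpow_natCast, ht, div_pow, ← inv_div, mul_pow]
    field_simp
  rw [hA] at key
  set A : ℝ := (m:ℝ)^d/x^d with hAdef
  have hA0 : 0 ≤ A := by positivity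
  set P : ℝ := (2:ℝ)^d with hP
  have hP1 : 1 ≤ P := one_le_pow₀ (by norm_num)
  set E : ℝ := Real.exp 1 with hE
  have hE2 : 2 ≤ E := by
    have := Real.add_one_le_exp 1
    linarith
  have hmt : (m:ℝ) * t = x / 2 := by rw [ht]; field_simp
  -- key : P * A ≤ 2^(d+1) * (1-t) + 2*t - 1
  have key2 : A * m * P ≤ 2*P*m - P*x + x - m := by
    have h4 : (2:ℝ)^(d+1) = 2*P := by rw [hP, pow_succ]; ring
    rw [h4] at key
    have := mul_le_mul_of_nonneg_left key hm0.le
    nlinarith [this, hmt]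
  have hL : 1/(m:ℝ) + (m:ℝ)^d / (E * x^(d+1)) = (E*x*P + A*m*P)/((m:ℝ)*E*x*P) := by
    rw [hAdef, pow_succ]
    have hE0 : (0:ℝ) < E := by linarith
    field_simp
  have hR : 2/x + 1/(P * E * x) = (2*(m:ℝ)*E*P + m)/((m:ℝ)*E*x*P) := by
    have hE0 : (0:ℝ) < E := by linarith
    field_simp
  rw [hL, hR]
  apply (div_le_div_iff_of_pos_right (show (0:ℝ) < (m:ℝ)*E*x*P by positivity)).mpr
  have hEP : P + 1 ≤ E*P := by nlinarith
  nlinarith [key2, mul_nonneg (by linarith : (0:ℝ) ≤ 2*(m:ℝ) - x)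
    (by linarith : (0:ℝ) ≤ E*P - P - 1)]

lemma p_one_sub_le (n : ℕ) (hn : 0 < n) (p : ℝ) (hp0 : 0 ≤ p) (hp1 : p ≤ 1) :
    p * (1-p)^n ≤ 1 / (Real.exp 1 * n) := by
  have h1 : (1-p)^n ≤ Real.exp (-(n*p)) := by
    calc (1-p)^n ≤ (Real.exp (-p))^n := by
          apply pow_le_pow_left₀ (by linarith)
          linarith [Real.add_one_le_exp (-p)]
      _ = Real.exp (-(n*p)) := by
          rw [← Real.exp_nat_mul]; ring_nf
  have h2 : p * Real.exp (-(n*p)) ≤ 1 / (Real.exp 1 * n) := by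
    have hn0 : (0:ℝ) < n := by exact_mod_cast hn
    rw [le_div_iff₀ (by positivity)]
    have key : (n*p) * Real.exp (-(n*p)) * Real.exp 1 ≤ 1 := by
      set s : ℝ := (n:ℝ)*p with hs
      have hts : s ≤ Real.exp (s-1) := by linarith [Real.add_one_le_exp (s-1)]
      have h3 : s * Real.exp 1 ≤ Real.exp s := by
        rw [Real.exp_sub] at hts
        have e1 : Real.exp s / Real.exp 1 * Real.exp 1 = Real.exp s :=
          div_mul_cancel₀ _ (Real.exp_pos 1).ne'
        nlinarith [mul_le_mul_of_nonneg_right hts (Real.exp_pos 1).le]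
      calc s * Real.exp (-s) * Real.exp 1 = s * Real.exp 1 * Real.exp (-s) := by ring
        _ ≤ Real.exp s * Real.exp (-s) := by
            apply mul_le_mul_of_nonneg_right h3 (Real.exp_pos _).le
        _ = 1 := by rw [← Real.exp_add]; simp
    calc p * Real.exp (-(n*p)) * (Real.exp 1 * n) = (n*p) * Real.exp (-(n*p)) * Real.exp 1 := by ring
      _ ≤ 1 := key
  calc p * (1-p)^n ≤ p * Real.exp (-(n*p)) := by
        apply mul_le_mul_of_nonneg_left h1 hp0
    _ ≤ 1 / (Real.exp 1 * n) := h2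

noncomputable def Fnn (d n : ℕ) (hn : 0 < n) (x : EuclideanSpace ℝ (Fin d))
    (S : Fin n → EuclideanSpace ℝ (Fin d)) : ℝ :=
  Finset.univ.inf' ⟨⟨0, hn⟩, Finset.mem_univ _⟩ (fun j => dist x (S j))

lemma Fnn_le (d n : ℕ) (hn : 0 < n) (x : EuclideanSpace ℝ (Fin d))
    (S : Fin n → EuclideanSpace ℝ (Fin d)) (j : Fin n) :
    Fnn d n hn x S ≤ dist x (S j) :=
  Finset.inf'_le _ (Finset.mem_univ j)

lemma Fnn_nonneg (d n : ℕ) (hn : 0 < n) (x : EuclideanSpace ℝ (Fin d))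
    (S : Fin n → EuclideanSpace ℝ (Fin d)) : 0 ≤ Fnn d n hn x S :=
  Finset.le_inf' _ _ (fun _ _ => dist_nonneg)

lemma Fnn_cont (d n : ℕ) (hn : 0 < n) :
    Continuous (fun q : (EuclideanSpace ℝ (Fin d)) × (Fin n → EuclideanSpace ℝ (Fin d)) =>
      Fnn d n hn q.1 q.2) := by
  apply Continuous.finset_inf'_apply
  intro j _
  exact continuous_fst.dist ((continuous_apply j).comp continuous_snd)

noncomputable def gfun {ι : Type} [Fintype ι] (d n : ℕ) (δ Δ : ℝ)
    (A : ι → Set (EuclideanSpace ℝ (Fin d)))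
    (x : EuclideanSpace ℝ (Fin d)) (S : Fin n → EuclideanSpace ℝ (Fin d)) : ℝ :=
  δ + Δ * ∑ i, (A i).indicator (fun _ => (1:ℝ)) x
    * (Set.pi Set.univ (fun _ : Fin n => (A i)ᶜ)).indicator (fun _ => (1:ℝ)) S

lemma master (d n : ℕ) (hn : 0 < n)
    (D : Measure (EuclideanSpace ℝ (Fin d))) [IsProbabilityMeasure D]
    {ι : Type} [Fintype ι] (A : ι → Set (EuclideanSpace ℝ (Fin d)))
    (hA : ∀ i, MeasurableSet (A i))
    (hcover : ∀ᵐ x ∂D, ∃ i, x ∈ A i)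
    (δ Δ : ℝ) (hδ : 0 ≤ δ) (hΔ : 0 ≤ Δ)
    (hdiam : ∀ i, ∀ x ∈ A i, ∀ y ∈ A i, dist x y ≤ δ)
    (hbig : ∀ᵐ x ∂D, ∀ᵐ S ∂(Measure.pi fun _ : Fin n => D), ∀ j, dist x (S j) ≤ Δ) :
    ∫ x, ∫ S, Fnn d n hn x S ∂(Measure.pi fun _ : Fin n => D) ∂D
      ≤ δ + Δ * ∑ i, (D (A i)).toReal * (1 - (D (A i)).toReal)^n := by
  classical
  set ν : Measure (Fin n → EuclideanSpace ℝ (Fin d)) := Measure.pi fun _ : Fin n => D with hν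
  haveI : IsProbabilityMeasure ν := by rw [hν]; infer_instance
  have hMissMeas : ∀ i, MeasurableSet (Set.pi Set.univ (fun _ : Fin n => (A i)ᶜ)) :=
    fun i => MeasurableSet.univ_pi (fun _ => (hA i).compl)
  have hMissν : ∀ i, (ν (Set.pi Set.univ (fun _ : Fin n => (A i)ᶜ))).toReal
      = (1 - (D (A i)).toReal)^n := by
    intro i
    have h1 : ν (Set.pi Set.univ (fun _ : Fin n => (A i)ᶜ)) = (D (A i)ᶜ)^n := by
      rw [hν, Measure.pi_pi]; simp
    have h2 : D (A i)ᶜ = 1 - D (A i) := prob_compl_eq_one_sub (hA i)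
    rw [h1, h2, ENNReal.toReal_pow, ENNReal.toReal_sub_of_le prob_le_one ENNReal.one_ne_top]
    simp
  -- pointwise a.e. bound
  have hpt : ∀ᵐ x ∂D, ∀ᵐ S ∂ν, Fnn d n hn x S ≤ gfun d n δ Δ A x S := by
    filter_upwards [hcover, hbig] with x hx hbx
    obtain ⟨i, hxi⟩ := hx
    filter_upwards [hbx] with S hS
    have hsum0 : ∀ i' : ι, 0 ≤ (A i').indicator (fun _ => (1:ℝ)) x
        * (Set.pi Set.univ (fun _ : Fin n => (A i')ᶜ)).indicator (fun _ => (1:ℝ)) S :=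
      fun i' => mul_nonneg (Set.indicator_nonneg (fun _ _ => zero_le_one) x)
        (Set.indicator_nonneg (fun _ _ => zero_le_one) S)
    have hsumnn : (0:ℝ) ≤ ∑ i', (A i').indicator (fun _ => (1:ℝ)) x
        * (Set.pi Set.univ (fun _ : Fin n => (A i')ᶜ)).indicator (fun _ => (1:ℝ)) S :=
      Finset.sum_nonneg (fun i' _ => hsum0 i')
    by_cases hex : ∃ j, S j ∈ A i
    · obtain ⟨j, hj⟩ := hex
      have h1 : Fnn d n hn x S ≤ δ := (Fnn_le d n hn x S j).trans (hdiam i x hxi (S j) hj)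
      have h2 : δ ≤ gfun d n δ Δ A x S := by
        unfold gfun; nlinarith
      exact h1.trans h2
    · push_neg at hex
      have h1 : Fnn d n hn x S ≤ Δ := (Fnn_le d n hn x S ⟨0, hn⟩).trans (hS _)
      have hxind : (A i).indicator (fun _ => (1:ℝ)) x = 1 := Set.indicator_of_mem hxi _
      have hSind : (Set.pi Set.univ (fun _ : Fin n => (A i)ᶜ)).indicator (fun _ => (1:ℝ)) S = 1 := by
        apply Set.indicator_of_mem _ _
        simp only [Set.mem_pi, Set.mem_univ, forall_true_left, Set.mem_compl_iff]
        intro j; exact hex j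
      have h2 : (1:ℝ) ≤ ∑ i', (A i').indicator (fun _ => (1:ℝ)) x
          * (Set.pi Set.univ (fun _ : Fin n => (A i')ᶜ)).indicator (fun _ => (1:ℝ)) S := by
        have hle := Finset.single_le_sum (f := fun i' : ι => (A i').indicator (fun _ => (1:ℝ)) x
          * (Set.pi Set.univ (fun _ : Fin n => (A i')ᶜ)).indicator (fun _ => (1:ℝ)) S)
          (fun i' _ => hsum0 i') (Finset.mem_univ i)
        simp only [hxind, hSind, one_mul] at hle
        exact hle
      have h3 : Δ ≤ gfun d n δ Δ A x S := by
        unfold gfun; nlinarith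
      exact h1.trans h3
  -- integral of g over S
  have hgint : ∀ x, Integrable (fun S => gfun d n δ Δ A x S) ν := by
    intro x
    unfold gfun
    exact (integrable_const δ).add
      (((integrable_finset_sum _ (fun i _ =>
        (((integrable_const (1:ℝ)).indicator (hMissMeas i))).const_mul _))).const_mul Δ)
  have hGx : ∀ x, ∫ S, gfun d n δ Δ A x S ∂ν
      = δ + Δ * ∑ i, (A i).indicator (fun _ => (1:ℝ)) x * (1 - (D (A i)).toReal)^n := by
    intro x
    unfold gfun
    rw [integral_add (integrable_const δ) (((integrable_finset_sum _ (fun i _ =>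
        (((integrable_const (1:ℝ)).indicator (hMissMeas i))).const_mul _))).const_mul Δ)]
    rw [integral_const, integral_const_mul, integral_finset_sum _ (fun i _ =>
        (((integrable_const (1:ℝ)).indicator (hMissMeas i))).const_mul _)]
    simp only [measure_univ, probReal_univ, ENNReal.toReal_one, smul_eq_mul, one_mul]
    congr 2
    apply Finset.sum_congr rfl
    intro i _
    rw [integral_const_mul, integral_indicator_const _ (hMissMeas i), measureReal_def, hMissν i]
    simp [mul_comm]
  -- integrability of F in S for a.e. x
  have hFaesm : ∀ x, AEStronglyMeasurable (fun S => Fnn d n hn x S) ν := by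
    intro x
    exact (((Fnn_cont d n hn).comp (Continuous.prodMk_right x)).aestronglyMeasurable)
  have hFint : ∀ᵐ x ∂D, Integrable (fun S => Fnn d n hn x S) ν := by
    filter_upwards [hbig] with x hbx
    apply Integrable.mono' (integrable_const Δ) (hFaesm x)
    filter_upwards [hbx] with S hS
    rw [Real.norm_of_nonneg (Fnn_nonneg d n hn x S)]
    exact (Fnn_le d n hn x S ⟨0, hn⟩).trans (hS _)
  -- inner mono
  have hinner : ∀ᵐ x ∂D, ∫ S, Fnn d n hn x S ∂ν ≤ ∫ S, gfun d n δ Δ A x S ∂ν := by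
    filter_upwards [hpt, hFint] with x hx hix
    exact integral_mono_ae hix (hgint x) hx
  -- outer mono
  have houter_int1 : Integrable (fun x => ∫ S, Fnn d n hn x S ∂ν) D := by
    apply Integrable.mono' (integrable_const Δ)
    · exact ((Fnn_cont d n hn).stronglyMeasurable.integral_prod_right').aestronglyMeasurable
    · filter_upwards [hbig] with x hbx
      have : ‖∫ S, Fnn d n hn x S ∂ν‖ ≤ Δ * (ν Set.univ).toReal := by
        apply norm_integral_le_of_norm_le_const
        filter_upwards [hbx] with S hS
        rw [Real.norm_of_nonneg (Fnn_nonneg d n hn x S)]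
        exact (Fnn_le d n hn x S ⟨0, hn⟩).trans (hS _)
      simpa using this
  have houter_int2 : Integrable (fun x => ∫ S, gfun d n δ Δ A x S ∂ν) D := by
    rw [show (fun x => ∫ S, gfun d n δ Δ A x S ∂ν) = fun x =>
        δ + Δ * ∑ i, (A i).indicator (fun _ => (1:ℝ)) x * (1 - (D (A i)).toReal)^n from
      funext hGx]
    exact (integrable_const δ).add
      (((integrable_finset_sum _ (fun i _ =>
        (((integrable_const (1:ℝ)).indicator (hA i))).mul_const _))).const_mul Δ)
  calc ∫ x, ∫ S, Fnn d n hn x S ∂ν ∂D ≤ ∫ x, ∫ S, gfun d n δ Δ A x S ∂ν ∂D :=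
        integral_mono_ae houter_int1 houter_int2 hinner
    _ = ∫ x, (δ + Δ * ∑ i, (A i).indicator (fun _ => (1:ℝ)) x * (1 - (D (A i)).toReal)^n) ∂D := by
        congr 1; exact funext hGx
    _ = δ + Δ * ∑ i, (D (A i)).toReal * (1 - (D (A i)).toReal)^n := by
        rw [integral_add (integrable_const δ) (((integrable_finset_sum _ (fun i _ =>
          (((integrable_const (1:ℝ)).indicator (hA i))).mul_const _))).const_mul Δ)]
        rw [integral_const, integral_const_mul, integral_finset_sum _ (fun i _ =>
          (((integrable_const (1:ℝ)).indicator (hA i))).mul_const _)]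
        simp only [measure_univ, probReal_univ, ENNReal.toReal_one, smul_eq_mul, one_mul]
        congr 2
        apply Finset.sum_congr rfl
        intro i _
        rw [integral_mul_const, integral_indicator_const _ (hA i), measureReal_def]
        simp [mul_comm]

lemma dist_le_coords (d : ℕ) (x y : EuclideanSpace ℝ (Fin d)) (c : ℝ) (hc : 0 ≤ c)
    (h : ∀ i, |x i - y i| ≤ c) : dist x y ≤ Real.sqrt d * c := by
  rw [EuclideanSpace.dist_eq]
  have h1 : ∑ i, dist (x i) (y i)^2 ≤ ∑ _i : Fin d, c^2 := by
    apply Finset.sum_le_sum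
    intro i _
    rw [Real.dist_eq]
    exact pow_le_pow_left₀ (abs_nonneg _) (h i) 2
  have h2 : ∑ _i : Fin d, c^2 = (d:ℝ) * c^2 := by simp [mul_comm]
  calc Real.sqrt (∑ i, dist (x i) (y i)^2) ≤ Real.sqrt ((d:ℝ) * c^2) :=
        Real.sqrt_le_sqrt (by rw [← h2]; exact h1)
    _ = Real.sqrt d * c := by
        rw [Real.sqrt_mul (by positivity), Real.sqrt_sq hc]

def cell (d m : ℕ) (k : Fin d → Fin m) : Set (EuclideanSpace ℝ (Fin d)) :=
  {y | ∀ i, (k i : ℝ)/m ≤ y i ∧ y i < ((k i : ℝ)+1)/m}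

lemma cell_measurable (d m : ℕ) (k : Fin d → Fin m) : MeasurableSet (cell d m k) := by
  have : cell d m k = ⋂ i, (fun y : EuclideanSpace ℝ (Fin d) => y i) ⁻¹'
      (Set.Ico ((k i : ℝ)/m) (((k i : ℝ)+1)/m)) := by
    ext y; simp [cell, Set.mem_Ico]
  rw [this]
  exact MeasurableSet.iInter fun i =>
    (show Measurable fun y : EuclideanSpace ℝ (Fin d) => y i from (measurable_pi_apply i).comp (WithLp.measurable_ofLp 2 _))
      measurableSet_Ico

lemma cell_cover (d m : ℕ) (hm : 0 < m) (x : EuclideanSpace ℝ (Fin d))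
    (hx : ∀ i, x i ∈ Set.Ico (0:ℝ) 1) : ∃ k : Fin d → Fin m, x ∈ cell d m k := by
  have hm0 : (0:ℝ) < m := by exact_mod_cast hm
  refine ⟨fun i => ⟨⌊x i * m⌋₊, ?_⟩, ?_⟩
  · rw [Nat.floor_lt (by nlinarith [(hx i).1])]
    nlinarith [(hx i).2]
  · intro i
    constructor
    · rw [div_le_iff₀ hm0]
      push_cast
      exact Nat.floor_le (by nlinarith [(hx i).1])
    · rw [lt_div_iff₀ hm0]
      push_cast
      exact Nat.lt_floor_add_one _

lemma cell_diam (d m : ℕ) (hm : 0 < m) (k : Fin d → Fin m)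
    (x y : EuclideanSpace ℝ (Fin d)) (hx : x ∈ cell d m k) (hy : y ∈ cell d m k) :
    dist x y ≤ Real.sqrt d / m := by
  have hm0 : (0:ℝ) < m := by exact_mod_cast hm
  have := dist_le_coords d x y (1/m) (by positivity) (fun i => by
    obtain ⟨h1, h2⟩ := hx i
    obtain ⟨h3, h4⟩ := hy i
    rw [abs_le]
    constructor
    · have : ((k i : ℝ)+1)/m = (k i : ℝ)/m + 1/m := by ring
      rw [this] at h4
      linarith
    · have : ((k i : ℝ)+1)/m = (k i : ℝ)/m + 1/m := by ring
      rw [this] at h2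
      linarith)
  calc dist x y ≤ Real.sqrt d * (1/m) := this
    _ = Real.sqrt d / m := by ring

end Helpers


/-- Nearest-neighbor bound: for a distribution `D` supported on `[0,1)^d` and nearest-point
map `π`, the expected distance of a fresh point to its nearest sample point is at most
`2√d · n^{-1/(d+1)} + (√d/(2^d e)) · n^{-1/(d+1)}`. -/
theorem stmt_3 (d n : ℕ) (hd : 0 < d) (hn : 0 < n)
    (D : Measure (EuclideanSpace ℝ (Fin d))) [IsProbabilityMeasure D]
    (hsupp : ∀ᵐ x ∂D, ∀ i, x i ∈ Set.Ico (0 : ℝ) 1)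
    (π : EuclideanSpace ℝ (Fin d) → (Fin n → EuclideanSpace ℝ (Fin d)) →
        EuclideanSpace ℝ (Fin d))
    (hπmem : ∀ x S, ∃ j, π x S = S j)
    (hπnear : ∀ x S j, dist x (π x S) ≤ dist x (S j)) :
    ∫ x, ∫ S, dist x (π x S) ∂(Measure.pi fun _ : Fin n => D) ∂D
      ≤ 2 * Real.sqrt d * (n : ℝ) ^ (-(1 : ℝ) / (d + 1))
        + (Real.sqrt d / (2 ^ d * Real.exp 1)) * (n : ℝ) ^ (-(1 : ℝ) / (d + 1)) := by
  classical
  have hrw : ∀ (x : EuclideanSpace ℝ (Fin d)) (S : Fin n → EuclideanSpace ℝ (Fin d)),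
      dist x (π x S) = Fnn d n hn x S := by
    intro x S
    apply le_antisymm
    · exact Finset.le_inf' _ _ (fun j _ => hπnear x S j)
    · obtain ⟨j0, hj⟩ := hπmem x S
      calc Fnn d n hn x S ≤ dist x (S j0) := Fnn_le d n hn x S j0
        _ = dist x (π x S) := by rw [hj]
  simp_rw [hrw]
  set ν : Measure (Fin n → EuclideanSpace ℝ (Fin d)) := Measure.pi fun _ : Fin n => D with hν
  set r : ℝ := (n:ℝ) ^ (-(1:ℝ)/(d+1)) with hr
  have hn0 : (0:ℝ) < (n:ℝ) := by exact_mod_cast hn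
  have hd1 : (0:ℝ) < (d:ℝ) + 1 := by positivity
  have hsd : (0:ℝ) ≤ Real.sqrt d := Real.sqrt_nonneg _
  have hr0 : 0 ≤ r := Real.rpow_nonneg hn0.le _
  -- cube facts
  have hcubeMeas : MeasurableSet {x : EuclideanSpace ℝ (Fin d) | ∀ i, x i ∈ Set.Ico (0:ℝ) 1} := by
    have he : {x : EuclideanSpace ℝ (Fin d) | ∀ i, x i ∈ Set.Ico (0:ℝ) 1}
        = ⋂ i, (fun y : EuclideanSpace ℝ (Fin d) => y i) ⁻¹' (Set.Ico (0:ℝ) 1) := by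
      ext y; simp
    rw [he]
    exact MeasurableSet.iInter fun i =>
      (show Measurable fun y : EuclideanSpace ℝ (Fin d) => y i from (measurable_pi_apply i).comp (WithLp.measurable_ofLp 2 _))
        measurableSet_Ico
  have hcube1 : D {x : EuclideanSpace ℝ (Fin d) | ∀ i, x i ∈ Set.Ico (0:ℝ) 1} = 1 := by
    rw [← prob_compl_eq_zero_iff hcubeMeas, Set.compl_setOf]
    have := ae_iff.mp hsupp
    convert this using 2
  have haeS : ∀ᵐ S ∂ν, ∀ j, ∀ i, S j i ∈ Set.Ico (0:ℝ) 1 := by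
    rw [ae_all_iff]
    intro j
    have hbad : D {x : EuclideanSpace ℝ (Fin d) | ¬ ∀ i, x i ∈ Set.Ico (0:ℝ) 1} = 0 :=
      ae_iff.mp hsupp
    have hν0 : ν {S : Fin n → EuclideanSpace ℝ (Fin d) | ¬ ∀ i, S j i ∈ Set.Ico (0:ℝ) 1} = 0 :=
      Measure.pi_eval_preimage_null (μ := fun _ => D) (i := j) hbad
    exact ae_iff.mpr hν0
  have hbig : ∀ᵐ x ∂D, ∀ᵐ S ∂ν, ∀ j, dist x (S j) ≤ Real.sqrt d := by
    filter_upwards [hsupp] with x hx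
    filter_upwards [haeS] with S hS
    intro j
    have hb := dist_le_coords d x (S j) 1 zero_le_one (fun i => by
      obtain ⟨h1, h2⟩ := hx i
      obtain ⟨h3, h4⟩ := hS j i
      rw [abs_le]; constructor <;> linarith)
    simpa using hb
  by_cases hcase : n ≤ 2^(d+1)
  · -- small n : trivial bound √d
    have hmain := master d n hn D (ι := Unit)
      (fun _ => {x : EuclideanSpace ℝ (Fin d) | ∀ i, x i ∈ Set.Ico (0:ℝ) 1})
      (fun _ => hcubeMeas)
      (by filter_upwards [hsupp] with x hx; exact ⟨(), hx⟩)
      (Real.sqrt d) (Real.sqrt d) hsd hsd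
      (fun _ x hx y hy => by
        have hb := dist_le_coords d x y 1 zero_le_one (fun i => by
          obtain ⟨h1, h2⟩ := hx i
          obtain ⟨h3, h4⟩ := hy i
          rw [abs_le]; constructor <;> linarith)
        simpa using hb)
      hbig
    have hsum : (∑ _i : Unit,
        (D {x : EuclideanSpace ℝ (Fin d) | ∀ i, x i ∈ Set.Ico (0:ℝ) 1}).toReal
        * (1 - (D {x : EuclideanSpace ℝ (Fin d) | ∀ i, x i ∈ Set.Ico (0:ℝ) 1}).toReal)^n)
        = 0 := by
      have h1 : (D {x : EuclideanSpace ℝ (Fin d) | ∀ i, x i ∈ Set.Ico (0:ℝ) 1}).toReal = 1 := by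
        rw [hcube1]; simp
      simp only [Finset.univ_unique, Finset.sum_singleton, h1, sub_self,
        zero_pow hn.ne', mul_zero]
    rw [hsum] at hmain
    have hr2 : 1/2 ≤ r := by
      have e1 : ((2:ℝ)^(d+1)) ^ (-(1:ℝ)/(d+1)) = 1/2 := by
        rw [← Real.rpow_natCast (2:ℝ) (d+1), ← Real.rpow_mul (by norm_num : (0:ℝ) ≤ 2)]
        have e2 : ((d+1 : ℕ):ℝ) * (-(1:ℝ)/((d:ℝ)+1)) = -1 := by
          push_cast; field_simp
        rw [e2]
        rw [show (-1:ℝ) = ((-1:ℤ):ℝ) by norm_num, Real.rpow_intCast]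
        norm_num
      have e3 : ((2:ℝ)^(d+1)) ^ (-(1:ℝ)/(d+1)) ≤ r := by
        rw [hr]
        apply Real.rpow_le_rpow_of_nonpos hn0 (by exact_mod_cast hcase)
        apply div_nonpos_of_nonpos_of_nonneg <;> [norm_num; positivity]
      linarith
    have hfin : Real.sqrt d ≤ 2 * Real.sqrt d * r := by nlinarith
    have hpos2 : 0 ≤ (Real.sqrt d / (2 ^ d * Real.exp 1)) * r := by positivity
    calc ∫ x, ∫ S, Fnn d n hn x S ∂ν ∂D ≤ Real.sqrt d + Real.sqrt d * 0 := hmain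
      _ = Real.sqrt d := by ring
      _ ≤ 2 * Real.sqrt d * r + (Real.sqrt d / (2 ^ d * Real.exp 1)) * r := by linarith
  · -- large n : grid argument
    push_neg at hcase
    set X : ℝ := (n:ℝ) ^ ((1:ℝ)/(d+1)) with hX
    have hXpos : 0 < X := Real.rpow_pos_of_pos hn0 _
    have hXpow : X^(d+1) = (n:ℝ) := by
      rw [hX, ← Real.rpow_natCast ((n:ℝ) ^ ((1:ℝ)/(d+1))) (d+1),
        ← Real.rpow_mul hn0.le]
      have e2 : (1:ℝ)/((d:ℝ)+1) * ((d+1 : ℕ):ℝ) = 1 := by push_cast; field_simp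
      rw [e2, Real.rpow_one]
    have hX2 : 2 < X := by
      have h1 : (2:ℝ)^(d+1) < X^(d+1) := by
        rw [hXpow]; exact_mod_cast hcase
      exact lt_of_pow_lt_pow_left₀ (d+1) hXpos.le h1
    set m : ℕ := ⌈X/2⌉₊ with hmdef
    have hm2 : 2 ≤ m := by
      have h1 : 1 < ⌈X/2⌉₊ := by
        rw [Nat.lt_ceil]; push_cast; linarith
      omega
    have hm0 : 0 < m := by omega
    have hmR : (0:ℝ) < (m:ℝ) := by exact_mod_cast hm0
    have hmain := master d n hn D (ι := (Fin d → Fin m)) (cell d m)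
      (cell_measurable d m)
      (by filter_upwards [hsupp] with x hx; exact cell_cover d m hm0 x hx)
      (Real.sqrt d / m) (Real.sqrt d) (by positivity) hsd
      (fun k x hx y hy => cell_diam d m hm0 k x y hx hy)
      hbig
    have hsumb : ∑ k : Fin d → Fin m, (D (cell d m k)).toReal
        * (1 - (D (cell d m k)).toReal)^n ≤ ((m:ℝ)^d) * (1/(Real.exp 1 * n)) := by
      have hcard : (Finset.univ : Finset (Fin d → Fin m)).card = m^d := by
        rw [Finset.card_univ]; simp
      calc ∑ k : Fin d → Fin m, (D (cell d m k)).toReal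
            * (1 - (D (cell d m k)).toReal)^n
          ≤ (Finset.univ : Finset (Fin d → Fin m)).card • (1/(Real.exp 1 * n)) := by
            apply Finset.sum_le_card_nsmul
            intro k _
            apply p_one_sub_le n hn _ ENNReal.toReal_nonneg
            have h1 : D (cell d m k) ≤ 1 := prob_le_one
            have h2 := ENNReal.toReal_mono ENNReal.one_ne_top h1
            simpa using h2
        _ = ((m:ℝ)^d) * (1/(Real.exp 1 * n)) := by
            rw [hcard, nsmul_eq_mul]; push_cast; ring
    have hanal := anal_lemma d X hX2
    rw [← hmdef, hXpow] at hanal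
    have hrX : r = X⁻¹ := by
      rw [hr, hX, neg_div, Real.rpow_neg hn0.le]
    have hexp : (0:ℝ) < Real.exp 1 := Real.exp_pos 1
    calc ∫ x, ∫ S, Fnn d n hn x S ∂ν ∂D
        ≤ Real.sqrt d / m + Real.sqrt d * (∑ k : Fin d → Fin m, (D (cell d m k)).toReal
            * (1 - (D (cell d m k)).toReal)^n) := hmain
      _ ≤ Real.sqrt d / m + Real.sqrt d * (((m:ℝ)^d) * (1/(Real.exp 1 * n))) := by
          have := mul_le_mul_of_nonneg_left hsumb hsd
          linarith
      _ = Real.sqrt d * (1/(m:ℝ) + (m:ℝ)^d/(Real.exp 1 * (n:ℝ))) := by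
          field_simp
      _ ≤ Real.sqrt d * (2/X + 1/(2^d * Real.exp 1 * X)) :=
          mul_le_mul_of_nonneg_left hanal hsd
      _ = 2 * Real.sqrt d * r + (Real.sqrt d / (2 ^ d * Real.exp 1)) * r := by
          rw [hrX]
          have h2d : ((2:ℝ)^d) ≠ 0 := by positivity
          field_simp
end

section
/- Let μ be a σ-finite measure on X, let D_I, D_O be probability measures with densities f_I, f_O w.r.t. μ, and suppose there is a set B with μ(B) > 0 on which f_I ≥ c and f_O ≥ c for some c > 0. Let ℓ : Y_all × Y_all → [0,∞) be a loss with ℓ(y₁,y₂) = 0 iff y₁ = y₂, where Y_all = {1,...,K+1} with K ≥ 1. Fix α ∈ (0,1) and define for any function h : X → Y_all the risk R^α(h) = (1-α)·∫ min_{y∈{1,...,K}} ℓ(h(x), y) f_I(x) dμ + α·∫ ℓ(h(x), K+1) f_O(x) dμ. Then inf over all measurable h of R^α(h) ≥ c·c_α·μ(B) > 0, where c_α = min_{y₁∈Y_all} ((1-α)·min_{y₂∈{1,...,K}} ℓ(y₁,y₂) + α·ℓ(y₁,K+1)). -/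
open MeasureTheory ENNReal

/-- On an overlap region `B` of positive measure where both densities are bounded below by
`c > 0`, the mixed `α`-risk of every measurable hypothesis is bounded below by the positive
constant `c * c_α * μ B`, where `c_α` is the minimal pointwise mixed loss. Labels are
`Fin (K+1)`, the OOD label is `Fin.last K`, and ID labels are `Fin.castSucc y` for `y : Fin K`. -/
theorem stmt_8 {X : Type*} [MeasurableSpace X] (μ : Measure X) [SigmaFinite μ]
    (K : ℕ) (hK : 1 ≤ K)
    (ℓ : Fin (K + 1) → Fin (K + 1) → ℝ)
    (hℓ0 : ∀ y₁ y₂, 0 ≤ ℓ y₁ y₂) (hℓeq : ∀ y₁ y₂, ℓ y₁ y₂ = 0 ↔ y₁ = y₂)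
    (fI fO : X → ℝ≥0∞) (hfI : Measurable fI) (hfO : Measurable fO)
    (B : Set X) (hBmeas : MeasurableSet B) (hBpos : 0 < μ B)
    (c : ℝ≥0∞) (hc : 0 < c)
    (hlbI : ∀ x ∈ B, c ≤ fI x) (hlbO : ∀ x ∈ B, c ≤ fO x)
    (α : ℝ) (hα : α ∈ Set.Ioo (0 : ℝ) 1) :
    (∀ h : X → Fin (K + 1), Measurable h →
      c * ENNReal.ofReal
          (⨅ y₁ : Fin (K + 1),
            ((1 - α) * (⨅ y₂ : Fin K, ℓ y₁ y₂.castSucc) + α * ℓ y₁ (Fin.last K)))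
        * μ B
      ≤ ENNReal.ofReal (1 - α)
            * ∫⁻ x, ENNReal.ofReal (⨅ y₂ : Fin K, ℓ (h x) y₂.castSucc) * fI x ∂μ
        + ENNReal.ofReal α * ∫⁻ x, ENNReal.ofReal (ℓ (h x) (Fin.last K)) * fO x ∂μ)
    ∧ 0 < c * ENNReal.ofReal
          (⨅ y₁ : Fin (K + 1),
            ((1 - α) * (⨅ y₂ : Fin K, ℓ y₁ y₂.castSucc) + α * ℓ y₁ (Fin.last K)))
        * μ B := by
  haveI : Nonempty (Fin K) := ⟨⟨0, hK⟩⟩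
  obtain ⟨hα0, hα1⟩ := hα
  set F : Fin (K + 1) → ℝ := fun y₁ =>
    (1 - α) * (⨅ y₂ : Fin K, ℓ y₁ y₂.castSucc) + α * ℓ y₁ (Fin.last K) with hF
  have hinner_nonneg : ∀ y₁ : Fin (K + 1), 0 ≤ ⨅ y₂ : Fin K, ℓ y₁ y₂.castSucc :=
    fun y₁ => le_ciInf fun y₂ => hℓ0 _ _
  have hFpos : ∀ y₁, 0 < F y₁ := by
    intro y₁
    rcases eq_or_ne y₁ (Fin.last K) with rfl | hne
    · have hinf : 0 < ⨅ y₂ : Fin K, ℓ (Fin.last K) y₂.castSucc := by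
        obtain ⟨y₀, hy₀⟩ := Finite.exists_min (fun y₂ : Fin K => ℓ (Fin.last K) y₂.castSucc)
        have hle : (⨅ y₂ : Fin K, ℓ (Fin.last K) y₂.castSucc)
            = ℓ (Fin.last K) y₀.castSucc :=
          le_antisymm (ciInf_le (Finite.bddBelow_range _) y₀) (le_ciInf hy₀)
        rw [hle]
        rcases (hℓ0 (Fin.last K) y₀.castSucc).lt_or_eq with hlt | heq
        · exact hlt
        · exact absurd ((hℓeq _ _).mp heq.symm) (Fin.castSucc_lt_last y₀).ne'
      have h1 : 0 < (1 - α) * (⨅ y₂ : Fin K, ℓ (Fin.last K) y₂.castSucc) :=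
        mul_pos (by linarith) hinf
      have h2 : 0 ≤ α * ℓ (Fin.last K) (Fin.last K) := mul_nonneg hα0.le (hℓ0 _ _)
      simp only [hF]; linarith
    · have hpos : 0 < ℓ y₁ (Fin.last K) := by
        rcases (hℓ0 y₁ (Fin.last K)).lt_or_eq with hlt | heq
        · exact hlt
        · exact absurd ((hℓeq _ _).mp heq.symm) hne
      have h1 : 0 ≤ (1 - α) * (⨅ y₂ : Fin K, ℓ y₁ y₂.castSucc) :=
        mul_nonneg (by linarith) (hinner_nonneg y₁)
      have h2 : 0 < α * ℓ y₁ (Fin.last K) := mul_pos hα0 hpos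
      simp only [hF]; linarith
  have hcα : 0 < ⨅ y₁, F y₁ := by
    obtain ⟨y₀, hy₀⟩ := Finite.exists_min F
    have hle : (⨅ y₁, F y₁) = F y₀ :=
      le_antisymm (ciInf_le (Finite.bddBelow_range _) y₀) (le_ciInf hy₀)
    rw [hle]; exact hFpos y₀
  refine ⟨?_, ?_⟩
  · intro h hh
    set g : X → ℝ := fun x => ⨅ y₂ : Fin K, ℓ (h x) y₂.castSucc with hg
    set l : X → ℝ := fun x => ℓ (h x) (Fin.last K) with hl
    have hgm : Measurable fun x => ENNReal.ofReal (g x) :=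
      ENNReal.measurable_ofReal.comp
        ((measurable_of_countable
          (fun y : Fin (K + 1) => ⨅ y₂ : Fin K, ℓ y y₂.castSucc)).comp hh)
    have hlm : Measurable fun x => ENNReal.ofReal (l x) :=
      ENNReal.measurable_ofReal.comp
        ((measurable_of_countable (fun y : Fin (K + 1) => ℓ y (Fin.last K))).comp hh)
    have key : ∀ x ∈ B,
        c * ENNReal.ofReal (⨅ y₁, F y₁)
          ≤ ENNReal.ofReal (1 - α) * (ENNReal.ofReal (g x) * fI x)
            + ENNReal.ofReal α * (ENNReal.ofReal (l x) * fO x) := by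
      intro x hx
      have h1 : c * ENNReal.ofReal (⨅ y₁, F y₁) ≤ c * ENNReal.ofReal (F (h x)) :=
        mul_le_mul_right (ENNReal.ofReal_le_ofReal
          (ciInf_le (Finite.bddBelow_range _) (h x))) c
      have h2 : ENNReal.ofReal (F (h x))
          = ENNReal.ofReal (1 - α) * ENNReal.ofReal (g x)
            + ENNReal.ofReal α * ENNReal.ofReal (l x) := by
        rw [hF]
        rw [ENNReal.ofReal_add (mul_nonneg (by linarith) (hinner_nonneg _))
          (mul_nonneg hα0.le (hℓ0 _ _)), ENNReal.ofReal_mul (by linarith),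
          ENNReal.ofReal_mul hα0.le]
      calc c * ENNReal.ofReal (⨅ y₁, F y₁)
          ≤ c * ENNReal.ofReal (F (h x)) := h1
        _ = (ENNReal.ofReal (1 - α) * ENNReal.ofReal (g x)
              + ENNReal.ofReal α * ENNReal.ofReal (l x)) * c := by rw [h2, mul_comm]
        _ = ENNReal.ofReal (1 - α) * (ENNReal.ofReal (g x) * c)
              + ENNReal.ofReal α * (ENNReal.ofReal (l x) * c) := by ring
        _ ≤ ENNReal.ofReal (1 - α) * (ENNReal.ofReal (g x) * fI x)
              + ENNReal.ofReal α * (ENNReal.ofReal (l x) * fO x) := by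
            gcongr
            exacts [hlbI x hx, hlbO x hx]
    calc c * ENNReal.ofReal (⨅ y₁, F y₁) * μ B
        = ∫⁻ _ in B, c * ENNReal.ofReal (⨅ y₁, F y₁) ∂μ := by
          rw [setLIntegral_const]
      _ ≤ ∫⁻ x in B, (ENNReal.ofReal (1 - α) * (ENNReal.ofReal (g x) * fI x)
            + ENNReal.ofReal α * (ENNReal.ofReal (l x) * fO x)) ∂μ := by
          refine setLIntegral_mono ?_ key
          exact ((measurable_const.mul (hgm.mul hfI)).add
            (measurable_const.mul (hlm.mul hfO)))
      _ = ENNReal.ofReal (1 - α) * ∫⁻ x in B, ENNReal.ofReal (g x) * fI x ∂μ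
            + ENNReal.ofReal α * ∫⁻ x in B, ENNReal.ofReal (l x) * fO x ∂μ := by
          rw [lintegral_add_left
              (f := fun x => ENNReal.ofReal (1 - α) * (ENNReal.ofReal (g x) * fI x))
              (measurable_const.mul (hgm.mul hfI)),
            lintegral_const_mul _ (f := fun x => ENNReal.ofReal (g x) * fI x) (hgm.mul hfI),
            lintegral_const_mul _ (f := fun x => ENNReal.ofReal (l x) * fO x) (hlm.mul hfO)]
      _ ≤ ENNReal.ofReal (1 - α) * ∫⁻ x, ENNReal.ofReal (g x) * fI x ∂μ
            + ENNReal.ofReal α * ∫⁻ x, ENNReal.ofReal (l x) * fO x ∂μ := by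
          gcongr <;> exact Measure.restrict_le_self
  · exact ENNReal.mul_pos (ENNReal.mul_pos hc.ne' (ENNReal.ofReal_pos.mpr hcα).ne').ne' hBpos.ne'
end
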